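/- Let (X,u) and (Y,v) be closure spaces and σ a Čech closure operator on Y^X. Then σ is proper if and only if for every topological space Z having at most one non-isolated point (regarded as a closure space via its Kuratowski closure), continuity of g : Z × (X,u) → (Y,v) implies continuity of g* : Z → (Y^X,σ); and σ is admissible if and only if for every such space Z, continuity of g* : Z → (Y^X,σ) implies continuity of g : Z × (X,u) → (Y,v). -/

import Mathlib

open Set

universe u

/-- A Čech closure operator on a type `X`: it satisfies (C1) `cl ∅ = ∅`,
(C2) `A ⊆ cl A` and (C3) `cl (A ∪ B) = cl A ∪ cl B`.  The pair `(X, u)` is a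
(Čech) closure space. -/
structure CechClosure (X : Type u) : Type u where
  cl : Set X → Set X
  cl_empty : cl ∅ = ∅
  subset_cl : ∀ A : Set X, A ⊆ cl A
  cl_union : ∀ A B : Set X, cl (A ∪ B) = cl A ∪ cl B

namespace CechClosure

variable {X Y Z : Type u}

/-- The interior operator of a closure space: `int_u A = X \ u (X \ A)`. -/
def interior (u : CechClosure X) (A : Set X) : Set X := (u.cl Aᶜ)ᶜ

/-- `U` is a neighbourhood of `x` in `(X, u)` if `x ∈ int_u U`. -/
def Nhd (u : CechClosure X) (x : X) (U : Set X) : Prop := x ∈ u.interior U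

theorem interior_subset (u : CechClosure X) (A : Set X) : u.interior A ⊆ A := by
  intro x hx
  by_contra h
  exact hx (u.subset_cl _ h)

theorem interior_inter (u : CechClosure X) (A B : Set X) :
    u.interior (A ∩ B) = u.interior A ∩ u.interior B := by
  unfold interior
  rw [compl_inter, u.cl_union, compl_union]

theorem nhd_univ (u : CechClosure X) (x : X) : u.Nhd x univ := by
  simp [Nhd, interior, u.cl_empty]

theorem nhd_inter (u : CechClosure X) {x : X} {A B : Set X} (hA : u.Nhd x A)
    (hB : u.Nhd x B) : u.Nhd x (A ∩ B) := by
  have h := u.interior_inter A B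
  unfold Nhd at *
  rw [h]
  exact ⟨hA, hB⟩

/-- A function `f : (X, u) → (Y, v)` between closure spaces is continuous if
`f (u A) ⊆ v (f A)` for every `A ⊆ X`. -/
def Continuous (u : CechClosure X) (v : CechClosure Y) (f : X → Y) : Prop :=
  ∀ A : Set X, f '' u.cl A ⊆ v.cl (f '' A)

/-- The product of two closure spaces: `(z, x)` is in the closure of `S` iff every
"rectangle" `W ×ˢ U` of neighbourhoods `W` of `z` and `U` of `x` meets `S`. -/
def prod (w : CechClosure Z) (u : CechClosure X) : CechClosure (Z × X) where
  cl S := {p | ∀ W U, w.Nhd p.1 W → u.Nhd p.2 U → (W ×ˢ U ∩ S).Nonempty}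
  cl_empty := by
    ext p
    simp only [mem_setOf_eq, mem_empty_iff_false, iff_false]
    intro h
    rcases h univ univ (w.nhd_univ _) (u.nhd_univ _) with ⟨q, -, hq⟩
    exact hq
  subset_cl := by
    intro S p hp W U hW hU
    exact ⟨p, ⟨⟨w.interior_subset _ hW, u.interior_subset _ hU⟩, hp⟩⟩
  cl_union := by
    intro S T
    ext p
    simp only [mem_setOf_eq, mem_union]
    constructor
    · intro h
      by_contra hc
      push_neg at hc
      obtain ⟨h1, h2⟩ := hc
      simp only [← Set.not_nonempty_iff_eq_empty] at h1 h2
      obtain ⟨W1, U1, hW1, hU1, hne1⟩ := h1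
      obtain ⟨W2, U2, hW2, hU2, hne2⟩ := h2
      rcases h (W1 ∩ W2) (U1 ∩ U2) (w.nhd_inter hW1 hW2) (u.nhd_inter hU1 hU2) with
        ⟨q, ⟨⟨hq1, hq2⟩, hqST⟩⟩
      rcases hqST with hqS | hqT
      · exact hne1 ⟨q, ⟨⟨hq1.1, hq2.1⟩, hqS⟩⟩
      · exact hne2 ⟨q, ⟨⟨hq1.2, hq2.2⟩, hqT⟩⟩
    · rintro (h | h) W U hW hU
      · rcases h W U hW hU with ⟨q, hq1, hq2⟩
        exact ⟨q, hq1, Or.inl hq2⟩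
      · rcases h W U hW hU with ⟨q, hq1, hq2⟩
        exact ⟨q, hq1, Or.inr hq2⟩

/-- `Y^X`: the type of continuous functions between the closure spaces
`(X, u)` and `(Y, v)`. -/
def ContMap (u : CechClosure X) (v : CechClosure Y) : Type u :=
  {f : X → Y // Continuous u v f}

/-- A closure operator `σ` on `Y^X` is proper (splitting) if for every closure space
`(Z, w)`, continuity of `g : (Z, w) × (X, u) → (Y, v)` implies continuity of
`g* : (Z, w) → (Y^X, σ)`, where `g (z, x) = (g* z) x`. -/
def Proper (u : CechClosure X) (v : CechClosure Y) (σ : CechClosure (ContMap u v)) : Prop :=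
  ∀ (Z : Type u) (w : CechClosure Z) (G : Z → ContMap u v),
    Continuous (w.prod u) v (fun p => (G p.1).1 p.2) → Continuous w σ G

/-- A closure operator `σ` on `Y^X` is admissible (jointly continuous) if for every closure
space `(Z, w)`, continuity of `g* : (Z, w) → (Y^X, σ)` implies continuity of
`g : (Z, w) × (X, u) → (Y, v)`, where `g (z, x) = (g* z) x`. -/
def Admissible (u : CechClosure X) (v : CechClosure Y) (σ : CechClosure (ContMap u v)) : Prop :=
  ∀ (Z : Type u) (w : CechClosure Z) (G : Z → ContMap u v),
    Continuous w σ G → Continuous (w.prod u) v (fun p => (G p.1).1 p.2)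

/-- A topological space regarded as a closure space via its (Kuratowski) closure operator. -/
def ofTop {Z : Type u} (t : TopologicalSpace Z) : CechClosure Z :=
  letI := t
  { cl := fun A => _root_.closure A
    cl_empty := closure_empty
    subset_cl := fun _ => subset_closure
    cl_union := fun _ _ => closure_union }

/-- `le` is the order relation of a directed set: a reflexive and transitive relation on a
nonempty type in which every two elements have an upper bound. -/
structure IsDirectedOrder {Λ : Type*} (le : Λ → Λ → Prop) : Prop where
  refl : ∀ a, le a a
  trans : ∀ a b c, le a b → le b c → le a c
  directed : ∀ a b, ∃ c, le a c ∧ le b c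
  nonempty : Nonempty Λ

/-- Convergence of a net `s : Λ → X` (with order `le` on `Λ`) to a point `x` in a closure
space `(X, u)`: every neighbourhood of `x` contains `s l` residually. -/
def NetConv (u : CechClosure X) {Λ : Type*} (le : Λ → Λ → Prop) (s : Λ → X) (x : X) : Prop :=
  ∀ U : Set X, u.Nhd x U → ∃ l₀, ∀ l, le l₀ l → s l ∈ U

/-- The product order on `Λ × M`. -/
def prodLE {Λ M : Type*} (leΛ : Λ → Λ → Prop) (leM : M → M → Prop) :
    Λ × M → Λ × M → Prop :=
  fun p q => leΛ p.1 q.1 ∧ leM p.2 q.2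

/-- A net `F : Λ → Y^X` converges continuously to `f ∈ Y^X` if for every `x ∈ X` and every
net `s : M → X` converging to `x` in `(X, u)`, the net `(l, m) ↦ (F l) (s m)` (indexed by
`Λ × M` with the product order) converges to `f x` in `(Y, v)`. -/
def ContConv (u : CechClosure X) (v : CechClosure Y) {Λ : Type u} (leΛ : Λ → Λ → Prop)
    (F : Λ → ContMap u v) (f : ContMap u v) : Prop :=
  ∀ (M : Type u) (leM : M → M → Prop), IsDirectedOrder leM →
    ∀ (s : M → X) (x : X), NetConv u leM s x →
      NetConv v (prodLE leΛ leM) (fun p : Λ × M => (F p.1).1 (s p.2)) (f.1 x)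

/-- The upper limit of a net `A : Λ → Set X` of subsets of a closure space `(X, u)`: the set
of points `x` such that for every `l₀` and every neighbourhood `U` of `x` there is `l ≥ l₀`
with `A l ∩ U ≠ ∅`. -/
def UpperLim (u : CechClosure X) {Λ : Type*} (le : Λ → Λ → Prop) (A : Λ → Set X) : Set X :=
  {x | ∀ (l₀ : Λ) (U : Set X), u.Nhd x U → ∃ l, le l₀ l ∧ (A l ∩ U).Nonempty}

/-- `g : M → α` is a subnet of `f : Λ → α`: there is `φ : M → Λ` with `g = f ∘ φ` such that
`φ` is residually above any given index of `Λ`. -/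
def IsSubnet {α : Type*} {Λ M : Type*} (leΛ : Λ → Λ → Prop) (leM : M → M → Prop)
    (f : Λ → α) (g : M → α) : Prop :=
  ∃ φ : M → Λ, (∀ m, g m = f (φ m)) ∧ ∀ l₀, ∃ m₀, ∀ m, leM m₀ m → leΛ l₀ (φ m)

end CechClosure
namespace CechClosure

variable {X Y : Type u}

/-- A topological space has at most one non-isolated point. -/
def AtMostOneNonIsolated (Z : Type*) [TopologicalSpace Z] : Prop :=
  ∀ z₁ z₂ : Z, ¬IsOpen ({z₁} : Set Z) → ¬IsOpen ({z₂} : Set Z) → z₁ = z₂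

/-!
Given a closure space `(Z, w)` and a point `z₀`, take on `Z` the topology `topAt w z₀` in which
every point other than `z₀` is isolated and the open sets containing `z₀` are its
`w`-neighbourhoods. It has at most one non-isolated point, it is finer than `w`, and at `z₀` it
has the same neighbourhoods as `w`. Passing to a finer space on the domain side preserves
continuity, while continuity of `g*` at `z₀` and of `g` at the points `(z₀, x)` only sees the
neighbourhoods of `z₀`; so each property for `(Z, w)` at `z₀` follows from the same property
for `topAt w z₀`.
-/

variable {Z : Type u}

theorem cl_mono (w : CechClosure Z) {A B : Set Z} (h : A ⊆ B) : w.cl A ⊆ w.cl B := by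
  rw [← union_eq_self_of_subset_left h, w.cl_union]
  exact subset_union_left

theorem nhd_mono (w : CechClosure Z) {z : Z} {U V : Set Z} (h : U ⊆ V) (hU : w.Nhd z U) :
    w.Nhd z V :=
  fun hz => hU (w.cl_mono (compl_subset_compl.mpr h) hz)

theorem mem_cl_iff (w : CechClosure Z) {z : Z} {A : Set Z} :
    z ∈ w.cl A ↔ ∀ U, w.Nhd z U → (U ∩ A).Nonempty := by
  constructor
  · intro hz U hU
    by_contra hUA
    exact hU (w.cl_mono (fun a ha haU => hUA ⟨a, haU, ha⟩) hz)
  · intro h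
    by_contra hz
    have hAc : w.Nhd z Aᶜ := by rwa [Nhd, interior, compl_compl]
    simpa using h Aᶜ hAc

theorem mem_cl_of_forall_nhd {w w' : CechClosure Z} {z : Z} (h : ∀ U, w.Nhd z U → w'.Nhd z U)
    {A : Set Z} (hz : z ∈ w'.cl A) : z ∈ w.cl A :=
  w.mem_cl_iff.2 fun U hU => w'.mem_cl_iff.1 hz U (h U hU)

theorem prod_mem_cl_of_forall_nhd {w w' : CechClosure Z} (u : CechClosure X)
    {p : Z × X} (h : ∀ W, w.Nhd p.1 W → w'.Nhd p.1 W) {S : Set (Z × X)}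
    (hp : p ∈ (w'.prod u).cl S) : p ∈ (w.prod u).cl S :=
  fun W U hW hU => hp W U (h W hW) hU

theorem Continuous.of_cl_subset {w w' : CechClosure Z} {v : CechClosure Y} {f : Z → Y}
    (h : ∀ A, w'.cl A ⊆ w.cl A) (hf : Continuous w v f) : Continuous w' v f :=
  fun A => (image_mono (h A)).trans (hf A)

theorem nhd_ofTop_iff (t : TopologicalSpace Z) {z : Z} {U : Set Z} :
    (ofTop t).Nhd z U ↔ z ∈ @_root_.interior Z t U := by
  change z ∈ (@closure Z t Uᶜ)ᶜ ↔ _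
  rw [@closure_compl Z t, compl_compl]

abbrev topAt (w : CechClosure Z) (z₀ : Z) : TopologicalSpace Z where
  IsOpen U := z₀ ∈ U → w.Nhd z₀ U
  isOpen_univ := fun _ => w.nhd_univ z₀
  isOpen_inter := fun _ _ hU hV hz => w.nhd_inter (hU hz.1) (hV hz.2)
  isOpen_sUnion := fun _ hS ⟨U, hUS, hzU⟩ =>
    w.nhd_mono (subset_sUnion_of_mem hUS) (hS U hUS hzU)

theorem isOpen_singleton_topAt (w : CechClosure Z) {z₀ z : Z} (h : z ≠ z₀) :
    @IsOpen Z (w.topAt z₀) {z} :=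
  fun hz => absurd hz.symm h

theorem atMostOneNonIsolated_topAt (w : CechClosure Z) (z₀ : Z) :
    @AtMostOneNonIsolated Z (w.topAt z₀) := by
  intro z₁ z₂ h₁ h₂
  rw [not_imp_comm.mp w.isOpen_singleton_topAt h₁, not_imp_comm.mp w.isOpen_singleton_topAt h₂]

theorem nhd_topAt_of_nhd (w : CechClosure Z) (z₀ : Z) {z : Z} {U : Set Z} (hU : w.Nhd z U) :
    (ofTop (w.topAt z₀)).Nhd z U := by
  let := w.topAt z₀
  rw [nhd_ofTop_iff, mem_interior]
  obtain rfl | hz := eq_or_ne z z₀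
  · exact ⟨U, subset_rfl, fun _ => hU, w.interior_subset U hU⟩
  · exact ⟨{z}, singleton_subset_iff.2 (w.interior_subset U hU),
      w.isOpen_singleton_topAt hz, rfl⟩

theorem nhd_of_nhd_topAt_self (w : CechClosure Z) (z₀ : Z) {U : Set Z}
    (hU : (ofTop (w.topAt z₀)).Nhd z₀ U) : w.Nhd z₀ U := by
  let := w.topAt z₀
  rw [nhd_ofTop_iff, mem_interior] at hU
  obtain ⟨V, hVU, hV, hz₀V⟩ := hU
  exact w.nhd_mono hVU (hV hz₀V)

theorem cl_topAt_subset (w : CechClosure Z) (z₀ : Z) (A : Set Z) :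
    (ofTop (w.topAt z₀)).cl A ⊆ w.cl A :=
  fun _ => mem_cl_of_forall_nhd fun _ => w.nhd_topAt_of_nhd z₀

/-- A closure operator `σ` on `Y^X` is proper iff for every topological space `Z` having
at most one non-isolated point (regarded as a closure space via its Kuratowski closure),
continuity of `g : Z × (X, u) → (Y, v)` implies continuity of `g* : Z → (Y^X, σ)`; and it
is admissible iff for every such `Z` the reverse implication holds. -/
theorem proper_admissible_iff_atMostOneNonIsolated (u : CechClosure X) (v : CechClosure Y)
    (σ : CechClosure (ContMap u v)) :
    (Proper u v σ ↔
      ∀ (Z : Type u) [tZ : TopologicalSpace Z], AtMostOneNonIsolated Z →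
        ∀ G : Z → ContMap u v,
          Continuous ((ofTop tZ).prod u) v (fun p => (G p.1).1 p.2) →
          Continuous (ofTop tZ) σ G) ∧
    (Admissible u v σ ↔
      ∀ (Z : Type u) [tZ : TopologicalSpace Z], AtMostOneNonIsolated Z →
        ∀ G : Z → ContMap u v,
          Continuous (ofTop tZ) σ G →
          Continuous ((ofTop tZ).prod u) v (fun p => (G p.1).1 p.2)) := by
  refine ⟨⟨fun hP Z _ _ G => hP Z _ G, fun H Z w G hg => ?_⟩,
    ⟨fun hA Z _ _ G => hA Z _ G, fun H Z w G hG => ?_⟩⟩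
  · rintro A _ ⟨z, hz, rfl⟩
    have hg' := hg.of_cl_subset fun S _ =>
      prod_mem_cl_of_forall_nhd u fun _ => w.nhd_topAt_of_nhd z
    have hz' := mem_cl_of_forall_nhd (fun _ => w.nhd_of_nhd_topAt_self z) hz
    exact H Z (tZ := w.topAt z) (w.atMostOneNonIsolated_topAt z) G hg' A
      (mem_image_of_mem G hz')
  · rintro S _ ⟨p, hp, rfl⟩
    have hG' := hG.of_cl_subset (w.cl_topAt_subset p.1)
    have hp' := prod_mem_cl_of_forall_nhd u (fun _ => w.nhd_of_nhd_topAt_self p.1) hp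
    exact H Z (tZ := w.topAt p.1) (w.atMostOneNonIsolated_topAt p.1) G hG' S
      (mem_image_of_mem _ hp')

end CechClosure
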